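/- arXiv:2310.01186 — 4 statements merged into one kernel-verified Lean document; each statement's English description precedes it below -/
import Mathlib

section
/- Let χ : K_n^r → ℕ be a coloring with no rainbow copy of an r-graph F, and let 𝓗 ⊆ K_n^r be a rainbow subgraph (all edges of 𝓗 have pairwise distinct colors). Then 𝓗 contains no copy of the 2-blowup F_-[2] of any r-graph in F_-, i.e., 𝓗 is F_-[2]-free. -/
open Finset

/-- The complete `r`-graph on vertex set `Fin n`: all `r`-subsets. -/
def completeHG (n r : ℕ) : Finset (Finset (Fin n)) :=
  (Finset.univ : Finset (Fin n)).powersetCard r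

/-- `H` contains a copy of `F`. -/
def HasCopy {α β : Type*} [DecidableEq β] (F : Finset (Finset α))
    (H : Finset (Finset β)) : Prop :=
  ∃ ψ : α ↪ β, ∀ e ∈ F, e.image ψ ∈ H

/-- The `χ`-colored complete `r`-graph on `Fin n` contains a rainbow copy of `F`. -/
def HasRainbowCopy {α : Type*} (n : ℕ) (χ : Finset (Fin n) → ℕ)
    (F : Finset (Finset α)) : Prop :=
  ∃ ψ : α ↪ Fin n, ∀ e ∈ F, ∀ f ∈ F, χ (e.image ψ) = χ (f.image ψ) → e = f

/-- The `t`-blowup of `G`: each vertex is replaced by `t` copies, each edge by the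
corresponding complete multipartite hypergraph. An edge of `G[t]` is a set of vertices
using exactly one copy of each vertex of some edge of `G`. -/
def blowup {α : Type*} [Fintype α] [DecidableEq α] (G : Finset (Finset α)) (t : ℕ) :
    Finset (Finset (α × Fin t)) :=
  (Finset.univ : Finset (α × Fin t)).powerset.filter
    (fun f => f.image Prod.fst ∈ G ∧ f.card = (f.image Prod.fst).card)

/-- If `χ` admits no rainbow copy of `F` and `𝓗 ⊆ K_n^r` is a rainbow
subgraph, then `𝓗` contains no copy of the 2-blowup of any member of `F₋`. -/
theorem statement_1 {α : Type*} [Fintype α] [DecidableEq α] (n r : ℕ)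
    (F : Finset (Finset α)) (hF : ∀ e ∈ F, e.card = r)
    (χ : Finset (Fin n) → ℕ) (hχ : ¬ HasRainbowCopy n χ F)
    (H : Finset (Finset (Fin n))) (hH : H ⊆ completeHG n r)
    (hrb : Set.InjOn χ (H : Set (Finset (Fin n)))) :
    ∀ e ∈ F, ¬ HasCopy (blowup (F.erase e) 2) H := by
  classical
  intro e₀ he₀ hcopy
  obtain ⟨ψ, hψ⟩ := hcopy
  set Φ : (α → Fin 2) → α → Fin n := fun s a => ψ (a, s a) with hΦdef
  have hΦinj : ∀ s, Function.Injective (Φ s) := by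
    intro s a b hab
    exact congrArg Prod.fst (ψ.injective hab)
  have hginj : ∀ s : α → Fin 2, Function.Injective (fun a : α => (a, s a)) := by
    intro s a b hab
    exact congrArg Prod.fst hab
  have hfst : ∀ (s : α → Fin 2) (f : Finset α),
      (f.image (fun a => (a, s a))).image Prod.fst = f := by
    intro s f
    rw [Finset.image_image]
    exact Finset.image_id
  have himg : ∀ (s : α → Fin 2) (f : Finset α),
      f.image (Φ s) = (f.image (fun a => (a, s a))).image ψ := by
    intro s f; rw [Finset.image_image]; rfl
  have hblow : ∀ (s : α → Fin 2) (f : Finset α), f ∈ F.erase e₀ →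
      f.image (fun a => (a, s a)) ∈ blowup (F.erase e₀) 2 := by
    intro s f hf
    simp only [blowup, Finset.mem_filter, Finset.mem_powerset]
    refine ⟨Finset.subset_univ _, by rw [hfst]; exact hf, ?_⟩
    rw [hfst, Finset.card_image_of_injective _ (hginj s)]
  have hmemH : ∀ (s : α → Fin 2) (f : Finset α), f ∈ F.erase e₀ →
      f.image (Φ s) ∈ H := by
    intro s f hf
    rw [himg]
    exact hψ _ (hblow s f hf)
  have hB : ∀ (s t : α → Fin 2) (f g : Finset α), f ∈ F.erase e₀ → g ∈ F.erase e₀ →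
      f.image (Φ s) = g.image (Φ t) → f = g ∧ ∀ a ∈ f, s a = t a := by
    intro s t f g hf hg heq
    rw [himg, himg] at heq
    have h2 : f.image (fun a => (a, s a)) = g.image (fun a => (a, t a)) :=
      Finset.image_injective ψ.injective heq
    have hfg : f = g := by
      have h3 := congrArg (Finset.image Prod.fst) h2
      rwa [hfst, hfst] at h3
    refine ⟨hfg, fun a ha => ?_⟩
    have hmem : (a, s a) ∈ g.image (fun a => (a, t a)) := by
      rw [← h2]; exact Finset.mem_image_of_mem _ ha
    obtain ⟨b, hb, hba⟩ := Finset.mem_image.mp hmem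
    injection hba with h1 h2'
    subst h1
    exact h2'.symm
  rw [HasRainbowCopy] at hχ
  push_neg at hχ
  have key : ∀ s : α → Fin 2, ∃ f ∈ F, f ≠ e₀ ∧
      χ (e₀.image (Φ s)) = χ (f.image (Φ s)) := by
    intro s
    obtain ⟨e, he, f, hf, hcol, hne⟩ := hχ ⟨Φ s, hΦinj s⟩
    by_cases h1 : e = e₀
    · exact ⟨f, hf, fun h => hne (h1.trans h.symm), h1 ▸ hcol⟩
    by_cases h2 : f = e₀
    · exact ⟨e, he, h1, h2 ▸ hcol.symm⟩
    · exfalso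
      have hfe : e ∈ F.erase e₀ := Finset.mem_erase.mpr ⟨h1, he⟩
      have hff : f ∈ F.erase e₀ := Finset.mem_erase.mpr ⟨h2, hf⟩
      have heqi := hrb (Finset.mem_coe.mpr (hmemH s e hfe))
        (Finset.mem_coe.mpr (hmemH s f hff)) hcol
      exact hne ((hB s s e f hfe hff heqi).1)
  obtain ⟨f, hfF, hfne, hcol0⟩ := key (fun _ => 0)
  have hfe : f ∈ F.erase e₀ := Finset.mem_erase.mpr ⟨hfne, hfF⟩
  obtain ⟨v, hvf, hve⟩ : ∃ v ∈ f, v ∉ e₀ := by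
    by_contra h
    push_neg at h
    exact hfne (Finset.eq_of_subset_of_card_le h
      (by rw [hF f hfF, hF e₀ he₀]))
  set s₁ : α → Fin 2 := Function.update (fun _ => 0) v 1 with hs₁
  obtain ⟨f', hf'F, hf'ne, hcol1⟩ := key s₁
  have hf'e : f' ∈ F.erase e₀ := Finset.mem_erase.mpr ⟨hf'ne, hf'F⟩
  have he0img : e₀.image (Φ s₁) = e₀.image (Φ (fun _ => 0)) := by
    apply Finset.image_congr
    intro a ha
    have hav : a ≠ v := fun h => hve (h ▸ ha)
    simp [hΦdef, hs₁, Function.update_of_ne hav]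
  have hcc : χ (f'.image (Φ s₁)) = χ (f.image (Φ (fun _ => 0))) := by
    rw [← hcol1, he0img, hcol0]
  have heqset := hrb (Finset.mem_coe.mpr (hmemH s₁ f' hf'e))
    (Finset.mem_coe.mpr (hmemH (fun _ => 0) f hfe)) hcc
  obtain ⟨hff', hsel⟩ := hB s₁ (fun _ => 0) f' f hf'e hfe heqset
  have hv' := hsel v (hff' ▸ hvf)
  rw [hs₁] at hv'
  simp [Function.update_self] at hv'
end

section
/- Let F be a graph obtained from a bipartite graph with parts A and B by adding the edges of a forest inside part A. Then there is an independent set I ⊆ B of F such that the splitting F ∨ I is a forest. -/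
open Finset

/-- The `I`-splitting `F ∨ I` of a hypergraph `F` at an independent set `I`. -/
def splitSet {α : Type*} [DecidableEq α] (F : Finset (Finset α)) (I : Finset α) :
    Finset (Finset (α ⊕ α × Finset α)) :=
  F.image (fun e =>
    ((e \ I).image Sum.inl) ∪ ((e ∩ I).image (fun u => Sum.inr (u, e.erase u))))

/-- The simple graph determined by a set of 2-element edge finsets. -/
def toSimple {V : Type*} [DecidableEq V] (G : Finset (Finset V)) : SimpleGraph V :=
  SimpleGraph.fromEdgeSet {s | ∃ x y : V, x ≠ y ∧ s = s(x, y) ∧ ({x, y} : Finset V) ∈ G}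

lemma toSimple_adj {V : Type*} [DecidableEq V] (G : Finset (Finset V)) (x y : V) :
    (toSimple G).Adj x y ↔ x ≠ y ∧ ({x, y} : Finset V) ∈ G := by
  rw [toSimple, SimpleGraph.fromEdgeSet_adj]
  constructor
  · rintro ⟨⟨a, b, hab, hs, hm⟩, hne⟩
    refine ⟨hne, ?_⟩
    rcases Sym2.eq_iff.mp hs with ⟨rfl, rfl⟩ | ⟨rfl, rfl⟩
    · exact hm
    · rwa [Finset.pair_comm]
  · rintro ⟨hne, hm⟩
    exact ⟨⟨x, y, hne, rfl, hm⟩, hne⟩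

/-- Pull back a walk whose support lies in the range of an injective map. -/
lemma pull_walk {V W : Type*} {G : SimpleGraph W} (f : V → W)
    (hf : Function.Injective f) :
    ∀ {u z : W} (p : G.Walk u z), (∀ v ∈ p.support, ∃ a, v = f a) →
    ∀ {x y : V} (hu : u = f x) (hz : z = f y),
      ∃ q : (SimpleGraph.comap f G).Walk x y,
        p.copy hu hz = q.map (⟨f, fun h => h⟩ : SimpleGraph.comap f G →g G) := by
  intro u z p
  induction p with
  | nil =>
    intro _ x y hu hz
    subst hu
    cases hf hz
    exact ⟨SimpleGraph.Walk.nil, by simp⟩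
  | @cons u w _ h q ih =>
    intro hs x y hu hz
    subst hu
    obtain ⟨a, rfl⟩ : ∃ a, w = f a := hs w (by simp)
    obtain ⟨q', hq'⟩ := ih (fun v hv => hs v (by simp [hv])) rfl hz
    exact ⟨SimpleGraph.Walk.cons h q', by
      rw [SimpleGraph.Walk.copy_cons, hq']; rfl⟩

/-- Let `F` be a graph obtained from a bipartite graph with parts `A`, `B`
by adding the edges of a forest inside `A`. Then there is an independent set `I ⊆ B` of `F`
such that the splitting `F ∨ I` is a forest. -/
theorem statement_6 {α : Type*} [DecidableEq α] (A B : Finset α) (hAB : Disjoint A B)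
    (F : Finset (Finset α)) (hcard : ∀ e ∈ F, e.card = 2)
    (hedges : ∀ e ∈ F, e ⊆ A ∨ ((e ∩ A).card = 1 ∧ (e ∩ B).card = 1))
    (hforest : (toSimple (F.filter (fun e => e ⊆ A))).IsAcyclic) :
    ∃ I : Finset α, I ⊆ B ∧ (∀ e ∈ F, ¬ e ⊆ I) ∧
      (toSimple (splitSet F I)).IsAcyclic := by
  classical
  set fsplit : Finset α → Finset (α ⊕ α × Finset α) := fun e =>
    ((e \ B).image Sum.inl) ∪ ((e ∩ B).image (fun u => Sum.inr (u, e.erase u))) with hfsplit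
  -- computation of fsplit in the two cases
  have hA_case : ∀ e ∈ F, e ⊆ A → fsplit e = e.image Sum.inl := by
    intro e he hsub
    have hd : Disjoint e B := Finset.disjoint_of_subset_left hsub hAB
    have h1 : e ∩ B = ∅ := Finset.disjoint_iff_inter_eq_empty.mp hd
    have h2 : e \ B = e := Finset.sdiff_eq_self_iff_disjoint.mpr hd
    simp [hfsplit, h1, h2]
  have hAB_case : ∀ e ∈ F, (e ∩ A).card = 1 → (e ∩ B).card = 1 →
      ∃ a b : α, a ∈ A ∧ b ∈ B ∧ a ≠ b ∧ e = {a, b} ∧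
        fsplit e = {Sum.inl a, Sum.inr (b, ({a} : Finset α))} := by
    intro e he h1 h2
    obtain ⟨a, ha⟩ := Finset.card_eq_one.mp h1
    obtain ⟨b, hb⟩ := Finset.card_eq_one.mp h2
    have haA : a ∈ A := (Finset.mem_inter.mp (ha ▸ Finset.mem_singleton_self a)).2
    have hae : a ∈ e := (Finset.mem_inter.mp (ha ▸ Finset.mem_singleton_self a)).1
    have hbB : b ∈ B := (Finset.mem_inter.mp (hb ▸ Finset.mem_singleton_self b)).2
    have hbe : b ∈ e := (Finset.mem_inter.mp (hb ▸ Finset.mem_singleton_self b)).1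
    have hab : a ≠ b := fun h => (Finset.disjoint_left.mp hAB haA) (h ▸ hbB)
    have hsub : ({a, b} : Finset α) ⊆ e := by
      intro z hz; rcases Finset.mem_insert.mp hz with rfl | hz
      · exact hae
      · exact (Finset.mem_singleton.mp hz) ▸ hbe
    have hee : e = {a, b} := by
      refine (Finset.eq_of_subset_of_card_le hsub ?_).symm
      rw [hcard e he, Finset.card_insert_of_notMem (by simp [hab]), Finset.card_singleton]
    have hdB : e \ B = {a} := by
      rw [← Finset.sdiff_inter_self_left, hb, hee]
      rw [Finset.sdiff_singleton_eq_erase, Finset.erase_insert_of_ne hab,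
        Finset.erase_singleton, Finset.insert_empty]
    have herase : e.erase b = {a} := by
      rw [hee, Finset.erase_insert_of_ne hab, Finset.erase_singleton,
        Finset.insert_empty]
    refine ⟨a, b, haA, hbB, hab, hee, ?_⟩
    rw [hfsplit]
    simp only [hdB, hb, Finset.image_singleton, herase]
    ext z; simp
  have hmemsplit : ∀ s, s ∈ splitSet F B ↔ ∃ e ∈ F, fsplit e = s := by
    intro s; rw [splitSet, Finset.mem_image]
  -- L3 : inl-inl edges come from the forest inside A
  have hL3 : ∀ x y : α, ({Sum.inl x, Sum.inl y} : Finset (α ⊕ α × Finset α)) ∈ splitSet F B →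
      ({x, y} : Finset α) ∈ F.filter (fun e => e ⊆ A) := by
    intro x y hmem
    obtain ⟨e, he, heq⟩ := (hmemsplit _).mp hmem
    rcases hedges e he with hsub | ⟨h1, h2⟩
    · rw [hA_case e he hsub] at heq
      have he2 : e = {x, y} := by
        apply Finset.image_injective (f := (Sum.inl : α → α ⊕ α × Finset α)) Sum.inl_injective
        rw [heq]; simp
      exact Finset.mem_filter.mpr ⟨he2 ▸ he, he2 ▸ hsub⟩
    · exfalso
      obtain ⟨a, b, _, _, _, _, hf⟩ := hAB_case e he h1 h2
      rw [hf] at heq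
      have : Sum.inr (b, ({a} : Finset α)) ∈
          ({Sum.inl x, Sum.inl y} : Finset (α ⊕ α × Finset α)) := heq ▸ (by simp)
      simp at this
  -- L4 : the unique neighbour of an inr vertex
  have hL4 : ∀ (x : α ⊕ α × Finset α) (b : α) (s : Finset α), x ≠ Sum.inr (b, s) →
      ({x, Sum.inr (b, s)} : Finset (α ⊕ α × Finset α)) ∈ splitSet F B →
      ∃ a, s = {a} ∧ x = Sum.inl a := by
    intro x b s hxne hmem
    obtain ⟨e, he, heq⟩ := (hmemsplit _).mp hmem
    rcases hedges e he with hsub | ⟨h1, h2⟩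
    · exfalso
      rw [hA_case e he hsub] at heq
      have : Sum.inr (b, s) ∈ e.image Sum.inl := heq ▸ (by simp)
      simp at this
    · obtain ⟨a, b', _, _, _, _, hf⟩ := hAB_case e he h1 h2
      rw [hf] at heq
      have h1' : Sum.inr (b, s) ∈
          ({Sum.inl a, Sum.inr (b', ({a} : Finset α))} : Finset (α ⊕ α × Finset α)) :=
        heq ▸ (by simp)
      simp only [Finset.mem_insert, Finset.mem_singleton, reduceCtorEq, false_or,
        Sum.inr.injEq, Prod.mk.injEq] at h1'
      have h2' : x ∈ ({Sum.inl a, Sum.inr (b', ({a} : Finset α))} :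
          Finset (α ⊕ α × Finset α)) := heq ▸ (by simp)
      rcases Finset.mem_insert.mp h2' with rfl | h2'
      · exact ⟨a, h1'.2, rfl⟩
      · exfalso
        apply hxne
        rw [Finset.mem_singleton.mp h2', h1'.1, h1'.2]
  set G' := toSimple (splitSet F B) with hG'
  have hadj : ∀ x y, G'.Adj x y ↔ x ≠ y ∧
      ({x, y} : Finset (α ⊕ α × Finset α)) ∈ splitSet F B := fun x y =>
    toSimple_adj _ x y
  refine ⟨B, le_refl B, ?_, ?_⟩
  · -- independence
    intro e he hsub
    rcases hedges e he with hA | ⟨h1, _⟩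
    · have : e = ∅ := by
        rw [← Finset.subset_empty, ← Finset.disjoint_iff_inter_eq_empty.mp hAB]
        exact Finset.subset_inter hA hsub
      rw [this] at he; have := hcard ∅ he; simp at this
    · have : e ∩ A = ∅ := by
        rw [← Finset.subset_empty]
        intro z hz
        obtain ⟨hz1, hz2⟩ := Finset.mem_inter.mp hz
        exact absurd hz2 (Finset.disjoint_right.mp hAB (hsub hz1))
      rw [this] at h1; simp at h1
  · -- acyclicity
    -- an inr vertex has a unique neighbour
    have huniq : ∀ (b : α) (s : Finset α) (x y : α ⊕ α × Finset α),
        G'.Adj (Sum.inr (b, s)) x → G'.Adj (Sum.inr (b, s)) y → x = y := by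
      intro b s x y hx hy
      obtain ⟨hxne, hxm⟩ := (hadj _ _).mp hx
      obtain ⟨hyne, hym⟩ := (hadj _ _).mp hy
      rw [Finset.pair_comm] at hxm hym
      obtain ⟨a, hs, hxa⟩ := hL4 x b s (Ne.symm hxne) hxm
      obtain ⟨a', hs', hya⟩ := hL4 y b s (Ne.symm hyne) hym
      have : a = a' := Finset.singleton_injective (hs ▸ hs')
      rw [hxa, hya, this]
    -- no cycle starts at an inr vertex
    have no_inr : ∀ (b : α) (s : Finset α)
        (p : G'.Walk (Sum.inr (b, s)) (Sum.inr (b, s))), ¬ p.IsCycle := by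
      intro b s p hp
      cases p with
      | nil => exact hp.ne_nil rfl
      | @cons _ w _ h q =>
        obtain ⟨u, h₂, r, hr⟩ := SimpleGraph.Walk.exists_eq_cons_of_ne h.ne q.reverse
        have hwu : w = u := huniq b s w u h h₂
        have hmem : s(Sum.inr (b, s), u) ∈ q.edges := by
          have : s(Sum.inr (b, s), u) ∈ q.reverse.edges := by
            rw [hr]; simp
          rwa [SimpleGraph.Walk.edges_reverse, List.mem_reverse] at this
        have hnodup := hp.edges_nodup
        rw [SimpleGraph.Walk.edges_cons] at hnodup
        exact (List.nodup_cons.mp hnodup).1 (hwu ▸ hmem)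
    intro v p hp
    -- all support vertices are inl
    have hsupp : ∀ w ∈ p.support, ∃ a : α, w = Sum.inl a := by
      intro w hw
      cases w with
      | inl a => exact ⟨a, rfl⟩
      | inr bs =>
        exact absurd (hp.rotate hw) (no_inr bs.1 bs.2 (p.rotate _ hw))
    obtain ⟨a, rfl⟩ := hsupp v p.start_mem_support
    obtain ⟨q, hq⟩ := pull_walk Sum.inl Sum.inl_injective p hsupp rfl rfl
    rw [SimpleGraph.Walk.copy_rfl_rfl] at hq
    have hqc : q.IsCycle := by
      rw [← SimpleGraph.Walk.map_isCycle_iff_of_injective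
        (f := (⟨Sum.inl, fun h => h⟩ : SimpleGraph.comap Sum.inl G' →g G'))
        (Sum.inl_injective), ← hq]
      exact hp
    -- the comap is a subgraph of the forest inside A
    have hle : SimpleGraph.comap Sum.inl G' ≤ toSimple (F.filter (fun e => e ⊆ A)) := by
      intro x y hxy
      obtain ⟨hne, hm⟩ := (hadj _ _).mp hxy
      exact (toSimple_adj _ x y).mpr ⟨fun h => hne (by rw [h]), hL3 x y hm⟩
    exact hforest (q.mapLe hle) (hqc.mapLe hle)
end

section
/- Let ℓ ≥ r ≥ 3. The expansion H_{ℓ+1}^r of the complete graph K_{ℓ+1} is a subgraph of the expansion H_{G}^r, where G = K_ℓ^γ[4] is the graph obtained from the 4-blowup K_ℓ[4] by adding one edge inside each of two different parts. -/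
open Finset

/-- The expansion of a hypergraph `F`, obtained by adding `s` fresh vertices to each
edge of `F`, distinct edges receiving disjoint sets of new vertices. (For a `k`-graph `F`
and `s = r − k` this is the `r`-graph `H_F^r`.) -/
def expand {α : Type*} [DecidableEq α] (F : Finset (Finset α)) (s : ℕ) :
    Finset (Finset (α ⊕ Finset α × Fin s)) :=
  F.image (fun e =>
    (e.image Sum.inl) ∪ (Finset.univ.image (fun j : Fin s => Sum.inr (e, j))))

/-- For `ℓ ≥ r ≥ 3`, the expansion `H_{K_{ℓ+1}}^r` of the complete graph
`K_{ℓ+1}` is (isomorphic to) a subgraph of the expansion `H_G^r`, where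
`G = K_ℓ^γ[4]` is the 4-blowup of `K_ℓ` with one extra edge added inside each of the
first two parts. -/
theorem statement_13 (r ℓ : ℕ) (hr : 3 ≤ r) (hl : r ≤ ℓ) :
    HasCopy
      (expand ((Finset.univ : Finset (Fin (ℓ + 1))).powersetCard 2) (r - 2))
      (expand
        (insert ({((⟨0, by omega⟩ : Fin ℓ), (0 : Fin 4)), (⟨0, by omega⟩, 1)} : Finset (Fin ℓ × Fin 4))
          (insert ({((⟨1, by omega⟩ : Fin ℓ), (0 : Fin 4)), (⟨1, by omega⟩, 1)} : Finset (Fin ℓ × Fin 4))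
            (blowup ((Finset.univ : Finset (Fin ℓ)).powersetCard 2) 4)))
        (r - 2)) := by
  classical
  have hℓ : 3 ≤ ℓ := hr.trans hl
  set φ : Fin (ℓ + 1) → Fin ℓ × Fin 4 := fun i =>
    if h : (i : ℕ) < ℓ then (⟨i, h⟩, 0) else (⟨0, by omega⟩, 1) with hφdef
  have hφ : Function.Injective φ := by
    intro i j hij
    have hi2 := i.isLt; have hj2 := j.isLt
    by_cases hi : (i : ℕ) < ℓ <;> by_cases hj : (j : ℕ) < ℓ <;>
      simp [hφdef, hi, hj, Prod.ext_iff, Fin.ext_iff, -Fin.val_eq_zero_iff] at hij ⊢ <;> omega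
  -- key: φ maps edges of K_{ℓ+1} to edges of the target graph
  have hedge : ∀ e ∈ (Finset.univ : Finset (Fin (ℓ + 1))).powersetCard 2,
      e.image φ ∈
        (insert ({((⟨0, by omega⟩ : Fin ℓ), (0 : Fin 4)), (⟨0, by omega⟩, 1)} : Finset (Fin ℓ × Fin 4))
          (insert ({((⟨1, by omega⟩ : Fin ℓ), (0 : Fin 4)), (⟨1, by omega⟩, 1)} : Finset (Fin ℓ × Fin 4))
            (blowup ((Finset.univ : Finset (Fin ℓ)).powersetCard 2) 4))) := by
    intro e he
    rw [Finset.mem_powersetCard] at he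
    obtain ⟨a, b, hab, rfl⟩ := Finset.card_eq_two.mp he.2
    have ha2 := a.isLt; have hb2 := b.isLt
    have hblow : ∀ p q : Fin ℓ × Fin 4, p ≠ q → p.1 ≠ q.1 →
        ({p, q} : Finset (Fin ℓ × Fin 4)) ∈
          blowup ((Finset.univ : Finset (Fin ℓ)).powersetCard 2) 4 := by
      intro p q hpq h1
      simp only [blowup, Finset.mem_filter, Finset.mem_powerset, Finset.image_insert,
        Finset.image_singleton, Finset.mem_powersetCard]
      refine ⟨Finset.subset_univ _, ⟨Finset.subset_univ _, Finset.card_pair h1⟩, ?_⟩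
      rw [Finset.card_pair hpq, Finset.card_pair h1]
    rw [Finset.image_insert, Finset.image_singleton]
    by_cases ha : (a : ℕ) < ℓ <;> by_cases hb : (b : ℕ) < ℓ
    · refine Finset.mem_insert_of_mem (Finset.mem_insert_of_mem (hblow _ _ ?_ ?_)) <;>
        simp [hφdef, ha, hb, Prod.ext_iff, Fin.ext_iff] <;>
        exact fun h => hab (Fin.ext h)
    · -- b = ℓ
      by_cases ha0 : (a : ℕ) = 0
      · have h1 : φ a = (⟨0, by omega⟩, 0) := by
          simp [hφdef, ha, Prod.ext_iff, Fin.ext_iff, ha0, show (0:ℕ) < ℓ from by omega]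
        have h2 : φ b = (⟨0, by omega⟩, 1) := by simp [hφdef, hb]
        rw [h1, h2]; exact Finset.mem_insert_self _ _
      · refine Finset.mem_insert_of_mem (Finset.mem_insert_of_mem (hblow _ _ ?_ ?_)) <;>
          simp [hφdef, ha, hb, Prod.ext_iff, Fin.ext_iff, -Fin.val_eq_zero_iff] <;> omega
    · by_cases hb0 : (b : ℕ) = 0
      · have h1 : φ a = (⟨0, by omega⟩, 1) := by simp [hφdef, ha]
        have h2 : φ b = (⟨0, by omega⟩, 0) := by
          simp [hφdef, hb, Prod.ext_iff, Fin.ext_iff, hb0, show (0:ℕ) < ℓ from by omega]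
        rw [h1, h2, Finset.pair_comm]; exact Finset.mem_insert_self _ _
      · refine Finset.mem_insert_of_mem (Finset.mem_insert_of_mem (hblow _ _ ?_ ?_)) <;>
          simp [hφdef, ha, hb, Prod.ext_iff, Fin.ext_iff] <;> omega
    · exact absurd (Fin.ext (by omega : (a:ℕ) = b)) hab
  refine ⟨⟨Sum.elim (fun a => Sum.inl (φ a)) (fun p => Sum.inr (p.1.image φ, p.2)), ?_⟩, ?_⟩
  · intro x y hxy
    rcases x with a | ⟨e, j⟩ <;> rcases y with b | ⟨f, k⟩ <;>
        simp only [Sum.elim_inl, Sum.elim_inr, Sum.inl.injEq, Sum.inr.injEq,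
          Prod.mk.injEq, reduceCtorEq] at hxy
    · exact congrArg Sum.inl (hφ hxy)
    · obtain ⟨h1, h2⟩ := hxy
      rw [Finset.image_injective hφ h1, h2]
  · intro E hE
    simp only [expand, Finset.mem_image] at hE ⊢
    obtain ⟨e, he, rfl⟩ := hE
    refine ⟨e.image φ, hedge e he, ?_⟩
    rw [Finset.image_union, Finset.image_image, Finset.image_image, Finset.image_image]
    congr 1
end

section
/- Under the hypotheses of the previous setup, if Q_1 and Q_2 are two edge-disjoint copies (inside a common rainbow subgraph 𝓗 of K_n^r, n ≥ v(Q_1) + v(Q_2) + r) of members of H_{F_-}^r with associated completing k-sets e_1 ⊆ V(Q_1), e_2 ⊆ V(Q_2) (i.e., Q_i ∪ {e_i ∪ S} is a copy of H_F^r for every (r−k)-set S disjoint from V(Q_i)), and χ is rainbow-H_F^r-free, then e_1 ≠ e_2. -/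
open Finset

/-- `Q` is a copy of `F` (equal, as an edge set, to an embedded image of `F`). -/
def IsCopyOf {α β : Type*} [DecidableEq β] (F : Finset (Finset α))
    (Q : Finset (Finset β)) : Prop :=
  ∃ ψ : α ↪ β, F.image (Finset.image ψ) = Q

/-- If `Q` is a copy of `F'` and `χ` is injective on `Q`, then there is a rainbow copy. -/
lemma hasRainbowCopy_of_isCopyOf {α : Type*} {n : ℕ} (χ : Finset (Fin n) → ℕ)
    (F' : Finset (Finset α)) (Q : Finset (Finset (Fin n)))
    (h : IsCopyOf F' Q) (hinj : Set.InjOn χ (Q : Set (Finset (Fin n)))) :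
    HasRainbowCopy n χ F' := by
  classical
  obtain ⟨ψ, hψ⟩ := h
  refine ⟨ψ, fun a ha b hb hab => ?_⟩
  have ha' : a.image ψ ∈ Q := hψ ▸ Finset.mem_image_of_mem _ ha
  have hb' : b.image ψ ∈ Q := hψ ▸ Finset.mem_image_of_mem _ hb
  exact Finset.image_injective ψ.2 (hinj ha' hb' hab)

/-- If `Q₁, Q₂` are edge-disjoint copies of members of `H_{F₋}^r`
inside a common rainbow subgraph `𝓗` of `K_n^r` (with `n ≥ v(Q₁) + v(Q₂) + r`), with
associated completing `k`-sets `e₁ ⊆ V(Q₁)` and `e₂ ⊆ V(Q₂)`, and `χ` is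
rainbow-`H_F^r`-free, then `e₁ ≠ e₂`. -/
theorem statement_15 {α : Type*} [DecidableEq α] (n r k : ℕ) (hk : 2 ≤ k) (hkr : k < r)
    (F : Finset (Finset α)) (hF : ∀ e ∈ F, e.card = k)
    (χ : Finset (Fin n) → ℕ)
    (hfree : ¬ HasRainbowCopy n χ (expand F (r - k)))
    (H : Finset (Finset (Fin n))) (hH : H ⊆ completeHG n r)
    (hrb : Set.InjOn χ (H : Set (Finset (Fin n))))
    (Q₁ Q₂ : Finset (Finset (Fin n))) (hQ₁ : Q₁ ⊆ H) (hQ₂ : Q₂ ⊆ H)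
    (hdisj : Disjoint Q₁ Q₂)
    (hn : (Q₁.sup id).card + (Q₂.sup id).card + r ≤ n)
    (hQ₁copy : ∃ e₀ ∈ F, IsCopyOf (expand (F.erase e₀) (r - k)) Q₁)
    (hQ₂copy : ∃ e₀ ∈ F, IsCopyOf (expand (F.erase e₀) (r - k)) Q₂)
    (e₁ e₂ : Finset (Fin n))
    (he₁ : e₁ ⊆ Q₁.sup id) (he₁card : e₁.card = k)
    (he₂ : e₂ ⊆ Q₂.sup id) (he₂card : e₂.card = k)
    (hcomp₁ : ∀ S : Finset (Fin n), S.card = r - k → Disjoint S (Q₁.sup id) →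
      IsCopyOf (expand F (r - k)) (insert (e₁ ∪ S) Q₁))
    (hcomp₂ : ∀ S : Finset (Fin n), S.card = r - k → Disjoint S (Q₂.sup id) →
      IsCopyOf (expand F (r - k)) (insert (e₂ ∪ S) Q₂)) :
    e₁ ≠ e₂ := by

  classical
  intro heq
  subst heq
  -- choose S of size r - k avoiding both vertex sets
  set V₁ := Q₁.sup id
  set V₂ := Q₂.sup id
  have hcard : r - k ≤ ((Finset.univ : Finset (Fin n)) \ (V₁ ∪ V₂)).card := by
    have h1 : (V₁ ∪ V₂).card ≤ V₁.card + V₂.card := Finset.card_union_le _ _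
    have h2 : ((Finset.univ : Finset (Fin n)) \ (V₁ ∪ V₂)).card
        = n - (V₁ ∪ V₂).card := by
      rw [Finset.card_sdiff_of_subset (Finset.subset_univ _), Finset.card_univ, Fintype.card_fin]
    omega
  obtain ⟨S, hSsub, hScard⟩ := Finset.exists_subset_card_eq hcard
  have hSd : ∀ x ∈ S, x ∉ V₁ ∪ V₂ := fun x hx =>
    (Finset.mem_sdiff.1 (hSsub hx)).2
  have hSd₁ : Disjoint S V₁ := Finset.disjoint_left.2 fun x hx hx1 =>
    hSd x hx (Finset.mem_union_left _ hx1)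
  have hSd₂ : Disjoint S V₂ := Finset.disjoint_left.2 fun x hx hx2 =>
    hSd x hx (Finset.mem_union_right _ hx2)
  -- the completing edge
  set g : Finset (Fin n) := e₁ ∪ S with hg
  -- χ g cannot coincide with colors of edges in both Q₁ and Q₂
  have key : (∀ f ∈ Q₁, χ f ≠ χ g) ∨ (∀ f ∈ Q₂, χ f ≠ χ g) := by
    by_contra hcon
    push_neg at hcon
    obtain ⟨⟨f₁, hf₁, hc₁⟩, ⟨f₂, hf₂, hc₂⟩⟩ := hcon
    have : f₁ = f₂ := hrb (hQ₁ hf₁) (hQ₂ hf₂) (hc₁.trans hc₂.symm)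
    exact Finset.disjoint_left.1 hdisj hf₁ (this ▸ hf₂)
  have main : ∀ (Q : Finset (Finset (Fin n))), Q ⊆ H →
      IsCopyOf (expand F (r - k)) (insert g Q) → (∀ f ∈ Q, χ f ≠ χ g) → False := by
    intro Q hQH hcopy hgood
    apply hfree
    refine hasRainbowCopy_of_isCopyOf χ _ _ hcopy ?_
    intro a ha b hb hab
    simp only [Finset.coe_insert, Set.mem_insert_iff, Finset.mem_coe] at ha hb
    rcases ha with rfl | ha <;> rcases hb with rfl | hb
    · rfl
    · exact absurd hab.symm (hgood b hb)
    · exact absurd hab (hgood a ha)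
    · exact hrb (hQH ha) (hQH hb) hab
  rcases key with h | h
  · exact main Q₁ hQ₁ (hcomp₁ S hScard hSd₁) h
  · exact main Q₂ hQ₂ (hcomp₂ S hScard hSd₂) h
end
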